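/- There exist constants c₁, c₂ > 0 and ε₀ ∈ (0,1/2) such that for every ε ∈ (0, ε₀]: (i) for every p ∈ (0,1], p + hc(ε/p) ≥ c₁·√(h(ε)); and (ii) there exists p ∈ (0,1] with p + hc(ε/p) ≤ c₂·√(h(ε)). -/

import Mathlib

/-- The base-2 binary entropy function, with the convention `0 * log 0 = 0`. -/
noncomputable def binEnt (x : ℝ) : ℝ :=
  -(x * Real.logb 2 x) - (1 - x) * Real.logb 2 (1 - x)

/-- The truncated binary entropy `hc(x) = h(min(x, 1/2))`. -/
noncomputable def hc (x : ℝ) : ℝ := binEnt (min x (1 / 2))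

/-!
For `0 < x ≤ 1/4` the entropy satisfies `x log₂(1/x) ≤ h(x) ≤ 2 x log₂(1/x)`. With
`L = log₂(1/ε)` and `s = √h(ε)` this gives `εL ≤ s² ≤ 2εL`.
Lower bound: if `p < s/4` then `ε/p ≥ u := 4ε/s`, and `u² ≤ 4ε` gives `log₂(1/u) ≥ L/2 - 1`,
so `hc(ε/p) ≥ h(u) ≥ u (L/2 - 1) ≍ εL/s ≍ s`.
Upper bound: take `p = s`; then `t = ε/s ∈ [ε, 1/4]`, so `hc(t) ≤ 2 t log₂(1/t) ≤ 2 t L ≤ 2 s`.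
-/

open Real

lemma binEnt_eq_binEntropy_div (x : ℝ) : binEnt x = binEntropy x / log 2 := by
  simp only [binEnt, binEntropy, logb, log_inv]
  ring

lemma binEnt_le_one (x : ℝ) : binEnt x ≤ 1 := by
  rw [binEnt_eq_binEntropy_div, div_le_one (log_pos one_lt_two)]
  exact binEntropy_le_log_two

lemma binEnt_monotoneOn : MonotoneOn binEnt (Set.Icc 0 (1 / 2)) := by
  intro x hx y hy hxy
  simp only [binEnt_eq_binEntropy_div, one_div] at *
  gcongr
  exact binEntropy_strictMonoOn.monotoneOn hx hy hxy

lemma hc_nonneg {x : ℝ} (hx : 0 ≤ x) : 0 ≤ hc x := by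
  rw [hc, binEnt_eq_binEntropy_div]
  have hmin : min x (1 / 2) ≤ 1 := (min_le_right _ _).trans (by norm_num)
  exact div_nonneg (binEntropy_nonneg (le_min hx (by norm_num)) hmin) (log_pos one_lt_two).le

lemma hc_monotoneOn : MonotoneOn hc (Set.Ici 0) := fun x hx y _ hxy =>
  binEnt_monotoneOn ⟨le_min hx (by norm_num), min_le_right _ _⟩
    ⟨le_min (hx.trans hxy) (by norm_num), min_le_right _ _⟩ (min_le_min_right _ hxy)

lemma mul_neg_logb_le_binEnt {x : ℝ} (hx₀ : 0 ≤ x) (hx₁ : x ≤ 1) :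
    x * -logb 2 x ≤ binEnt x := by
  have : logb 2 (1 - x) ≤ 0 := logb_nonpos one_lt_two (by linarith) (by linarith)
  rw [binEnt]
  nlinarith

lemma binEnt_le_neg_mul_logb_add {x : ℝ} (hx₀ : 0 ≤ x) (hx₁ : x ≤ 1) :
    binEnt x ≤ -(x * logb 2 x) + 2 * x := by
  have hlog2 : 1 / 2 < log 2 := by linarith [log_two_gt_d9]
  have hneg : negMulLog (1 - x) ≤ x := by
    simpa using negMulLog_le_one_sub_self (x := 1 - x) (by linarith)
  have h : negMulLog (1 - x) / log 2 ≤ 2 * x := by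
    rw [div_le_iff₀ (by linarith)]
    nlinarith
  have : -((1 - x) * logb 2 (1 - x)) = negMulLog (1 - x) / log 2 := by
    rw [negMulLog, logb]; ring
  rw [binEnt]
  linarith

lemma le_neg_logb_two_of_le_inv_pow {x : ℝ} {n : ℕ} (hx : 0 < x) (h : x ≤ (2 ^ n)⁻¹) :
    n ≤ -logb 2 x := by
  have := logb_le_logb_of_le one_lt_two hx h
  rwa [logb_inv, logb_pow, logb_self_eq_one one_lt_two, mul_one, le_neg] at this

lemma binEnt_le_two_mul_neg_mul_logb {x : ℝ} (hx₀ : 0 < x) (hx : x ≤ 1 / 4) :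
    binEnt x ≤ 2 * (x * -logb 2 x) := by
  have h2 : ((2 : ℕ) : ℝ) ≤ -logb 2 x := le_neg_logb_two_of_le_inv_pow hx₀ (by norm_num [hx])
  have := binEnt_le_neg_mul_logb_add hx₀.le (by linarith)
  push_cast at h2
  nlinarith

lemma neg_logb_div_two_sub_one_le {ε u : ℝ} (hε : 0 < ε) (hu : 0 < u) (h : u ^ 2 ≤ 4 * ε) :
    -logb 2 ε / 2 - 1 ≤ -logb 2 u := by
  have := logb_le_logb_of_le one_lt_two (by positivity) h
  rw [logb_pow, show (4 : ℝ) = 2 ^ 2 by norm_num, logb_mul (by norm_num) hε.ne', logb_pow,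
    logb_self_eq_one one_lt_two] at this
  push_cast at this
  linarith

lemma sqrt_binEnt_div_four_le_add_hc {ε p : ℝ} (hε : 0 < ε) (hε₀ : ε ≤ 1 / 64) (hp : 0 < p) :
    √(binEnt ε) / 4 ≤ p + hc (ε / p) := by
  set s := √(binEnt ε)
  set L := -logb 2 ε
  have hL : ((6 : ℕ) : ℝ) ≤ L := le_neg_logb_two_of_le_inv_pow hε (by norm_num [hε₀])
  have hH₁ : ε * L ≤ binEnt ε := mul_neg_logb_le_binEnt hε.le (by linarith)
  have hH₂ : binEnt ε ≤ 2 * (ε * L) := binEnt_le_two_mul_neg_mul_logb hε (by linarith)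
  push_cast at hL
  have hH : 0 < binEnt ε := by nlinarith
  have hs2 : s ^ 2 = binEnt ε := sq_sqrt hH.le
  have hs : 0 < s := sqrt_pos.2 hH
  rcases le_or_gt (s / 4) p with hps | hps
  · linarith [hc_nonneg (div_pos hε hp).le]
  set u := 4 * ε / s
  have hus : u * s = 4 * ε := div_mul_cancel₀ _ hs.ne'
  have hu : 0 < u := by positivity
  have hu_sq : u ^ 2 ≤ 4 * ε := by
    rw [div_pow, hs2, div_le_iff₀ hH]
    nlinarith
  have hu_le : u ≤ 1 / 4 := by nlinarith
  have hu_le_div : u ≤ ε / p := by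
    rw [div_le_div_iff₀ hs hp]
    nlinarith
  calc s / 4 ≤ u * (L / 2 - 1) := by nlinarith
    _ ≤ u * -logb 2 u := by gcongr; exact neg_logb_div_two_sub_one_le hε hu hu_sq
    _ ≤ binEnt u := mul_neg_logb_le_binEnt hu.le (by linarith)
    _ = hc u := by rw [hc, min_eq_left (by linarith)]
    _ ≤ hc (ε / p) := hc_monotoneOn hu.le (div_pos hε hp).le hu_le_div
    _ ≤ p + hc (ε / p) := by linarith

lemma hc_div_sqrt_binEnt_le {ε : ℝ} (hε : 0 < ε) (hε₀ : ε ≤ 1 / 64) :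
    hc (ε / √(binEnt ε)) ≤ 2 * √(binEnt ε) := by
  set s := √(binEnt ε)
  set L := -logb 2 ε
  have hL : ((6 : ℕ) : ℝ) ≤ L := le_neg_logb_two_of_le_inv_pow hε (by norm_num [hε₀])
  have hH₁ : ε * L ≤ binEnt ε := mul_neg_logb_le_binEnt hε.le (by linarith)
  push_cast at hL
  have hH : 0 < binEnt ε := by nlinarith
  have hs2 : s ^ 2 = binEnt ε := sq_sqrt hH.le
  have hs : 0 < s := sqrt_pos.2 hH
  have hs1 : s ≤ 1 := sqrt_le_one.2 (binEnt_le_one ε)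
  set t := ε / s
  have hts : t * s = ε := div_mul_cancel₀ _ hs.ne'
  have ht : 0 < t := by positivity
  have ht_sq : t ^ 2 ≤ ε := by
    rw [div_pow, hs2, div_le_iff₀ hH]
    nlinarith
  have ht_le : t ≤ 1 / 4 := by nlinarith
  have hε_le : ε ≤ t := by nlinarith
  calc hc t = binEnt t := by rw [hc, min_eq_left (by linarith)]
    _ ≤ 2 * (t * -logb 2 t) := binEnt_le_two_mul_neg_mul_logb ht ht_le
    _ ≤ 2 * (t * L) := by gcongr; exact neg_le_neg (logb_le_logb_of_le one_lt_two hε hε_le)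
    _ ≤ 2 * s := by nlinarith

/-- The minimum of `p + hc(ε/p)` over `p ∈ (0,1]` has order `√(h(ε))`: there are
`c₁, c₂ > 0` and `ε₀ ∈ (0,1/2)` such that for all `ε ∈ (0,ε₀]`, every `p ∈ (0,1]`
satisfies `p + hc(ε/p) ≥ c₁·√(h(ε))`, while some `p ∈ (0,1]` satisfies
`p + hc(ε/p) ≤ c₂·√(h(ε))`. -/
theorem stmt_17 :
    ∃ c₁ c₂ ε₀ : ℝ, 0 < c₁ ∧ 0 < c₂ ∧ 0 < ε₀ ∧ ε₀ < 1 / 2 ∧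
      ∀ ε : ℝ, 0 < ε → ε ≤ ε₀ →
        (∀ p : ℝ, 0 < p → p ≤ 1 → c₁ * Real.sqrt (binEnt ε) ≤ p + hc (ε / p)) ∧
        (∃ p : ℝ, 0 < p ∧ p ≤ 1 ∧ p + hc (ε / p) ≤ c₂ * Real.sqrt (binEnt ε)) := by
  refine ⟨1 / 4, 3, 1 / 64, by norm_num, by norm_num, by norm_num, by norm_num,
    fun ε hε hε₀ => ⟨fun p hp _ => ?_, ⟨√(binEnt ε), ?_, ?_, ?_⟩⟩⟩
  · linarith [sqrt_binEnt_div_four_le_add_hc hε hε₀ hp]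
  · rw [binEnt_eq_binEntropy_div]
    exact sqrt_pos.2 (div_pos (binEntropy_pos hε (by linarith)) (log_pos one_lt_two))
  · exact sqrt_le_one.2 (binEnt_le_one ε)
  · linarith [hc_div_sqrt_binEnt_le hε hε₀]
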